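/- Independence of word basis functions: fix a finite alphabet A and a nonempty word w = ℓₙ…ℓ₁ over A with n letters. Set d = n and define vector fields f_k on R^d by assigning, for j = 1,…,d, the (d−j+1)-th component of the field x ↦ (x², x³, …, x^d, 1) to f_k where k is the letter in the j-th position of w (all other components of each f_k are zero). Then the word basis functions f_u, defined recursively by f_ℓ = f_ℓ and f_{ℓₙ…ℓ₁}(x) = f'_{ℓ_{n−1}…ℓ₁}(x) f_{ℓₙ}(x), satisfy: the first component f_u¹(0) vanishes for every nonempty word u ≠ w, while f_w¹(0) = 1. -/

import Mathlib

/-- Word basis functions: `f_∅ = id`, and for a nonempty word `kₙ…k₁` (head of the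
list is the leftmost letter `kₙ`), `f_{kₙ…k₁}(x) = f'_{k_{n−1}…k₁}(x) f_{kₙ}(x)`
(Jacobian of the shorter word's basis function applied to `f_{kₙ}(x)`). -/
noncomputable def wordBasis {A : Type*} {d : ℕ} (f : A → (Fin d → ℝ) → (Fin d → ℝ)) :
    List A → (Fin d → ℝ) → (Fin d → ℝ)
  | [] => fun x => x
  | k :: u => fun x => fderiv ℝ (wordBasis f u) x (f k x)

/-- The paper's construction for a fixed nonempty word `w` with `d` letters: the
field `x ↦ (x², x³, …, x^d, 1)` on `ℝ^d` is split by assigning its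
`(d−j+1)`-th component to `f_k` when `k` is the letter in the `j`-th position of
`w` (all other components of `f_k` vanish).  Components are 0-indexed here:
component `i` (1-based `i+1`) equals `x_{i+2}` (1-based) for `i+1 < d` and `1`
for the last component, and belongs to `f_k` iff the letter of `w` in (0-based)
position `d−1−i` is `k`. -/
noncomputable def splitField {A : Type*} [DecidableEq A] (w : List A) (k : A)
    (x : Fin w.length → ℝ) : Fin w.length → ℝ :=
  fun i => if w[w.length - 1 - i.val]? = some k then
    (if h : i.val + 1 < w.length then x ⟨i.val + 1, h⟩ else 1) else 0

/-- The affine function that `wordBasis (splitField w) u` turns out to equal. -/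
noncomputable def wbAff {A : Type*} [DecidableEq A] (w u : List A)
    (x : Fin w.length → ℝ) (i : Fin w.length) : ℝ :=
  if u <+: w.drop (w.length - u.length - i.val) ∧ i.val + u.length ≤ w.length then
    (if h : i.val + u.length < w.length then x ⟨i.val + u.length, h⟩ else 1) else 0

/-- Its (constant) derivative. -/
noncomputable def wbDer {A : Type*} [DecidableEq A] (w u : List A) :
    (Fin w.length → ℝ) →L[ℝ] (Fin w.length → ℝ) :=
  ContinuousLinearMap.pi fun i =>
    if h : u <+: w.drop (w.length - u.length - i.val) ∧ i.val + u.length < w.length then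
      ContinuousLinearMap.proj ⟨i.val + u.length, h.2⟩ else 0

theorem wbAff_hasFDerivAt {A : Type*} [DecidableEq A] (w u : List A) (x : Fin w.length → ℝ) :
    HasFDerivAt (wbAff w u) (wbDer w u) x := by
  apply hasFDerivAt_pi''
  intro i
  unfold wbAff wbDer
  by_cases h1 : u <+: w.drop (w.length - u.length - i.val) ∧ i.val + u.length ≤ w.length
  · by_cases h2 : i.val + u.length < w.length
    · have : (fun x : Fin w.length → ℝ => if u <+: w.drop (w.length - u.length - i.val) ∧ i.val + u.length ≤ w.length then
          (if h : i.val + u.length < w.length then x ⟨i.val + u.length, h⟩ else 1) else 0)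
        = fun x => x ⟨i.val + u.length, h2⟩ := by
        funext y; rw [if_pos h1, dif_pos h2]
      rw [this]
      have := hasFDerivAt_apply (𝕜 := ℝ) (F' := fun _ : Fin w.length => ℝ)
        ⟨i.val + u.length, h2⟩ x
      refine this.congr_fderiv ?_
      ext y
      simp [ContinuousLinearMap.proj, dif_pos (And.intro h1.1 h2)]
    · have : (fun x : Fin w.length → ℝ => if u <+: w.drop (w.length - u.length - i.val) ∧ i.val + u.length ≤ w.length then
          (if h : i.val + u.length < w.length then x ⟨i.val + u.length, h⟩ else 1) else 0)
        = fun _ => (1 : ℝ) := by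
        funext y; rw [if_pos h1, dif_neg h2]
      rw [this]
      have := hasFDerivAt_const (𝕜 := ℝ) (1 : ℝ) x
      refine this.congr_fderiv ?_
      ext y
      simp [dif_neg (fun hc : _ ∧ _ => h2 hc.2)]
  · have : (fun x : Fin w.length → ℝ => if u <+: w.drop (w.length - u.length - i.val) ∧ i.val + u.length ≤ w.length then
        (if h : i.val + u.length < w.length then x ⟨i.val + u.length, h⟩ else 1) else 0)
      = fun _ => (0 : ℝ) := by
      funext y; rw [if_neg h1]
    rw [this]
    have := hasFDerivAt_const (𝕜 := ℝ) (0 : ℝ) x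
    refine this.congr_fderiv ?_
    ext y
    have : ¬ (u <+: w.drop (w.length - u.length - i.val) ∧ i.val + u.length < w.length) :=
      fun hc => h1 ⟨hc.1, le_of_lt hc.2⟩
    simp [dif_neg this]

theorem cons_prefix_drop {A : Type*} (w t : List A) (k : A) (m : ℕ) (hm : m < w.length) :
    (k :: t) <+: w.drop m ↔ w[m]? = some k ∧ t <+: w.drop (m + 1) := by
  rw [List.drop_eq_getElem_cons hm, List.cons_prefix_cons,
    List.getElem?_eq_getElem hm]
  constructor
  · rintro ⟨h1, h2⟩; exact ⟨by rw [h1], h2⟩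
  · rintro ⟨h1, h2⟩; exact ⟨(Option.some_injective _ h1).symm, h2⟩

theorem wordBasis_splitField {A : Type*} [DecidableEq A] (w : List A) (u : List A) :
    wordBasis (splitField w) u = wbAff w u := by
  induction u with
  | nil =>
    funext x i
    simp only [wordBasis, wbAff]
    rw [if_pos ⟨List.nil_prefix, by simp⟩, dif_pos (by simpa using i.isLt)]
    simp
  | cons k t ih =>
    funext x i
    simp only [wordBasis, ih]
    rw [(wbAff_hasFDerivAt w t x).fderiv]
    show wbDer w t (splitField w k x) i = wbAff w (k :: t) x i
    simp only [wbDer, wbAff, ContinuousLinearMap.pi_apply, List.length_cons]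
    by_cases hle : i.val + (t.length + 1) ≤ w.length
    · have hm : w.length - 1 - (i.val + t.length) < w.length := by omega
      have hm1 : w.length - 1 - (i.val + t.length) + 1 = w.length - t.length - i.val := by omega
      have hm2 : w.length - (t.length + 1) - i.val = w.length - 1 - (i.val + t.length) := by omega
      rw [hm2]
      simp only [cons_prefix_drop w t k _ hm, hm1]
      by_cases ht : t <+: w.drop (w.length - t.length - i.val)
      · rw [dif_pos ⟨ht, by omega⟩]
        simp only [ContinuousLinearMap.proj_apply, splitField]
        by_cases hk : w[w.length - 1 - (i.val + t.length)]? = some k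
        · rw [if_pos hk, if_pos ⟨⟨hk, ht⟩, hle⟩]
          by_cases hlt : i.val + t.length + 1 < w.length
          · rw [dif_pos hlt, dif_pos (show i.val + (t.length + 1) < w.length by omega)]
            congr 1
          · rw [dif_neg hlt, dif_neg (show ¬ i.val + (t.length + 1) < w.length by omega)]
        · rw [if_neg hk, if_neg (fun hc => hk hc.1.1)]
      · rw [dif_neg (fun hc => ht hc.1), if_neg (fun hc => ht hc.1.2)]
        exact ContinuousLinearMap.zero_apply _
    · rw [dif_neg (fun hc => hle (by omega : i.val + (t.length + 1) ≤ w.length)),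
        if_neg (fun hc => hle hc.2)]
      exact ContinuousLinearMap.zero_apply _


/-- independence of word basis functions.  For the above choice of
vector fields (depending on the nonempty word `w` over the finite alphabet `A`,
with `d` = number of letters of `w`), the first component of `f_u(0)` vanishes
for every nonempty word `u ≠ w`, while `f_w¹(0) = 1`. -/
theorem word_basis_independence {A : Type*} [DecidableEq A] [Fintype A]
    (w : List A) (hw : w ≠ []) :
    wordBasis (splitField w) w (fun _ => 0) ⟨0, List.length_pos_iff.mpr hw⟩ = 1 ∧
    ∀ u : List A, u ≠ [] → u ≠ w →
      wordBasis (splitField w) u (fun _ => 0) ⟨0, List.length_pos_iff.mpr hw⟩ = 0 := by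
  constructor
  · rw [wordBasis_splitField]
    simp only [wbAff]
    rw [if_pos ⟨by simp, by simp⟩, dif_neg (by simp)]
  · intro u hu huw
    rw [wordBasis_splitField]
    simp only [wbAff]
    by_cases hc : u <+: w.drop (w.length - u.length - (⟨0, List.length_pos_iff.mpr hw⟩ : Fin w.length).val) ∧ (⟨0, List.length_pos_iff.mpr hw⟩ : Fin w.length).val + u.length ≤ w.length
    · rw [if_pos hc]
      by_cases hlt : (⟨0, List.length_pos_iff.mpr hw⟩ : Fin w.length).val + u.length < w.length
      · rw [dif_pos hlt]
      · rw [dif_neg hlt]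
        exfalso
        have h2 := hc.2
        simp only [Fin.val_mk] at h2 hlt
        have hlen : u.length = w.length := by omega
        have h1 := hc.1
        rw [show w.length - u.length - (⟨0, List.length_pos_iff.mpr hw⟩ : Fin w.length).val = 0 by simp [hlen]] at h1
        rw [List.drop_zero] at h1
        exact huw (List.IsPrefix.eq_of_length h1 hlen)
    · rw [if_neg hc]
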